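/- arXiv:0808.0275 — 5 statements merged into one kernel-verified Lean document; each statement's English description precedes it below -/
import Mathlib

section
/- Let A be a commutative ring, E a nonzero A-module, and R := A ⋉ E the trivial ring extension of A by E. If R is an arithmetical ring, then A is an arithmetical ring. -/
/-!
`A` is the quotient of `A ⋉ E` by `0 ⋉ E`, and arithmeticity passes along any surjection
`f : R → S`: a finitely generated ideal of `S` is `f(J)` for a finitely generated ideal `J` of `R`,
and for a maximal ideal `P` of `S` the induced local map `R_{f⁻¹(P)} → S_P` sends a generator of
`J R_{f⁻¹(P)}` to a generator of `f(J) S_P`.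
-/

/-- The content ideal `c(f)` of a polynomial: the ideal generated by its coefficients. -/
def contentIdeal {R : Type*} [CommRing R] (f : Polynomial R) : Ideal R :=
  Ideal.span (Set.range f.coeff)

/-- A polynomial `f` is Gaussian if `c(f*g) = c(f)*c(g)` for every polynomial `g`. -/
def IsGaussianPoly {R : Type*} [CommRing R] (f : Polynomial R) : Prop :=
  ∀ g : Polynomial R, contentIdeal (f * g) = contentIdeal f * contentIdeal g

/-- A commutative ring is Gaussian if every polynomial over it is Gaussian. -/
def IsGaussianRing (R : Type*) [CommRing R] : Prop :=
  ∀ f : Polynomial R, IsGaussianPoly f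

/-- A commutative ring is arithmetical if every finitely generated ideal is locally
principal: its extension to the localization at each maximal ideal is principal. -/
def IsArithmeticalRing (R : Type*) [CommRing R] : Prop :=
  ∀ I : Ideal R, I.FG → ∀ P : Ideal R, ∀ hP : P.IsMaximal,
    haveI := hP.isPrime
    (I.map (algebraMap R (Localization P.primeCompl))).IsPrincipal

/-- A commutative ring is a Prüfer ring if every finitely generated ideal containing a
non-zero-divisor is invertible as a fractional ideal. -/
def IsPruferRing (R : Type*) [CommRing R] : Prop :=
  ∀ I : Ideal R, I.FG → (∃ r ∈ I, r ∈ nonZeroDivisors R) →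
    IsUnit (I : FractionalIdeal (nonZeroDivisors R) (FractionRing R))

/-- An integral domain is a Prüfer domain if every nonzero finitely generated ideal is
invertible as a fractional ideal. -/
def IsPruferDomain (A : Type*) [CommRing A] [IsDomain A] : Prop :=
  ∀ I : Ideal A, I.FG → I ≠ ⊥ →
    IsUnit (I : FractionalIdeal (nonZeroDivisors A) (FractionRing A))

/-- A commutative ring is a total ring of quotients if each of its elements is
either a unit or a zero-divisor. -/
def IsTotalRingOfQuotients (R : Type*) [CommRing R] : Prop :=
  ∀ r : R, IsUnit r ∨ r ∉ nonZeroDivisors R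

/-- A commutative ring is pseudo-arithmetical if every Gaussian polynomial over it has
locally principal content ideal. -/
def IsPseudoArithmetical (R : Type*) [CommRing R] : Prop :=
  ∀ f : Polynomial R, IsGaussianPoly f → ∀ P : Ideal R, ∀ hP : P.IsMaximal,
    haveI := hP.isPrime
    ((contentIdeal f).map (algebraMap R (Localization P.primeCompl))).IsPrincipal

/-- The ideal `0 ⋉ E` of the trivial ring extension `A ⋉ E`: the ideal of elements
with zero first component, i.e. the kernel of the projection `A ⋉ E → A`. -/
def zeroIdealTrivSqZeroExt (A E : Type*) [CommRing A] [AddCommGroup E] [Module A E]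
    [Module Aᵐᵒᵖ E] [IsCentralScalar A E] : Ideal (TrivSqZeroExt A E) :=
  RingHom.ker (TrivSqZeroExt.fstHom A A E).toRingHom

theorem Ideal.exists_fg_map_eq_of_surjective {R S : Type*} [CommRing R] [CommRing S]
    {f : R →+* S} (hf : Function.Surjective f) {I : Ideal S} (hI : I.FG) :
    ∃ J : Ideal R, J.FG ∧ J.map f = I := by
  classical
  obtain ⟨s, rfl⟩ := hI
  refine ⟨Ideal.span (s.image (Function.surjInv hf)), ⟨_, rfl⟩, ?_⟩
  rw [Ideal.map_span, Finset.coe_image, ← Set.image_comp,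
    (Function.rightInverse_surjInv hf).comp_eq_id, Set.image_id]

theorem IsArithmeticalRing.of_surjective {R S : Type*} [CommRing R] [CommRing S]
    (h : IsArithmeticalRing R) (f : R →+* S) (hf : Function.Surjective f) :
    IsArithmeticalRing S := by
  intro I hI P hP
  have := hP.isPrime
  obtain ⟨J, hJ, rfl⟩ := Ideal.exists_fg_map_eq_of_surjective hf hI
  have hQ : (P.comap f).IsMaximal := Ideal.comap_isMaximal_of_surjective f hf
  have := hQ.isPrime
  let g := Localization.localRingHom (P.comap f) P f rfl
  have hcomm : g.comp (algebraMap R (Localization (P.comap f).primeCompl)) =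
      (algebraMap S (Localization P.primeCompl)).comp f :=
    RingHom.ext (Localization.localRingHom_to_map (P.comap f) P f rfl)
  have hmap : (J.map f).map (algebraMap S (Localization P.primeCompl)) =
      (J.map (algebraMap R (Localization (P.comap f).primeCompl))).map g := by
    rw [Ideal.map_map, Ideal.map_map, hcomm]
  rw [hmap]
  exact (h J hJ _ hQ).map_ringHom g

theorem arithmetical_of_arithmetical_trivSqZeroExt_general (A E : Type*) [CommRing A]
    [AddCommGroup E] [Module A E] [Module Aᵐᵒᵖ E] [IsCentralScalar A E]
    (h : IsArithmeticalRing (TrivSqZeroExt A E)) : IsArithmeticalRing A :=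
  h.of_surjective (TrivSqZeroExt.fstHom A A E).toRingHom TrivSqZeroExt.fst_surjective

/-- If the trivial ring extension `R := A ⋉ E` of a commutative ring `A` by a
nonzero `A`-module `E` is an arithmetical ring, then `A` is an arithmetical ring. -/
theorem arithmetical_of_arithmetical_trivSqZeroExt (A E : Type*) [CommRing A]
    [AddCommGroup E] [Module A E] [Module Aᵐᵒᵖ E] [IsCentralScalar A E] [Nontrivial E]
    (h : IsArithmeticalRing (TrivSqZeroExt A E)) : IsArithmeticalRing A :=
  arithmetical_of_arithmetical_trivSqZeroExt_general A E h
end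

section
/- Let (A,M) be a local ring and E a nonzero A-module with M·E = 0 (i.e., E is a vector space over A/M). Then the trivial ring extension R := A ⋉ E is a Gaussian ring if and only if A is a Gaussian ring. -/
/-!
Gaussianity passes to quotients, and `A` is the quotient of `A ⋉ E` by `0 ⋉ E`.
Conversely, `A ⋉ E` is local, and over a local ring a polynomial with a unit coefficient is
Gaussian by Nakayama's lemma. If neither `F` nor `G` has a unit coefficient, all their
coefficients lie in `M ⋉ E`, where `M • E = 0` gives `(a, e) (a', e') = (a a', 0)`. Hence
`c(F G)` and `c(F) c(G)` are the extensions along `A → A ⋉ E` of the corresponding ideals for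
the images of `F` and `G` in `A[X]`.
-/

open scoped Polynomial
open TrivSqZeroExt IsLocalRing
open Finset.HasAntidiagonal (antidiagonal mem_antidiagonal)

namespace Polynomial

variable {R S : Type*} [CommRing R] [CommRing S]

theorem contentIdeal_eq_span_range_coeff (f : R[X]) :
    f.contentIdeal = Ideal.span (Set.range f.coeff) := by
  refine le_antisymm (Ideal.span_le.mpr fun c hc => ?_) (Ideal.span_le.mpr ?_)
  · obtain ⟨n, -, rfl⟩ := mem_coeffs_iff.mp hc
    exact Ideal.subset_span ⟨n, rfl⟩
  · rintro _ ⟨n, rfl⟩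
    exact f.coeff_mem_contentIdeal n

theorem coeff_mem_of_coeff_mul_mem {f g : R[X]} {K : Ideal R} {d : ℕ}
    (hd : IsUnit (f.coeff d)) (hfg : ∀ n, (f * g).coeff n ∈ K)
    (hf : ∀ a, d < a → ∀ b, f.coeff a * g.coeff b ∈ K) (j : ℕ) : g.coeff j ∈ K := by
  revert j
  suffices ∀ n j, g.natDegree < j + n → g.coeff j ∈ K from
    fun j => this (g.natDegree + 1) j (by omega)
  intro n
  induction n with
  | zero =>
    intro j hj
    rw [coeff_eq_zero_of_natDegree_lt (by omega)]
    exact K.zero_mem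
  | succ n ih =>
    intro j hj
    -- `(f g)_{d+j} = f_d g_j + ∑_{a < d} f_a g_b + ∑_{a > d} f_a g_b`, and `b > j` when `a < d`
    have hmem : (d, j) ∈ antidiagonal (d + j) := mem_antidiagonal.mpr rfl
    have hrest : ∀ p ∈ (antidiagonal (d + j)).erase (d, j),
        f.coeff p.1 * g.coeff p.2 ∈ K := by
      rintro ⟨a, b⟩ hp
      obtain ⟨hne, hab⟩ := Finset.mem_erase.mp hp
      have hab : a + b = d + j := mem_antidiagonal.mp hab
      rcases lt_trichotomy a d with had | rfl | hda
      · exact K.mul_mem_left _ (ih b (by omega))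
      · obtain rfl : b = j := by omega
        exact (hne rfl).elim
      · exact hf a hda b
    have hdj : f.coeff d * g.coeff j ∈ K := by
      have := hfg (d + j)
      rw [coeff_mul, ← Finset.add_sum_erase _ _ hmem] at this
      exact (K.add_mem_iff_left (K.sum_mem hrest)).mp this
    simpa [← mul_assoc] using K.mul_mem_left (↑hd.unit⁻¹) hdj

theorem exists_greatest_isUnit_coeff [IsLocalRing R] {f : R[X]} {i : ℕ}
    (hi : IsUnit (f.coeff i)) :
    ∃ d, IsUnit (f.coeff d) ∧ ∀ a, d < a → f.coeff a ∈ maximalIdeal R := by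
  classical
  refine ⟨Nat.findGreatest (fun k => IsUnit (f.coeff k)) f.natDegree,
    Nat.findGreatest_spec (P := fun k => IsUnit (f.coeff k))
      (le_natDegree_of_ne_zero hi.ne_zero) hi, fun a ha => ?_⟩
  rcases le_or_gt a f.natDegree with h | h
  · exact Nat.findGreatest_is_greatest ha h
  · rw [coeff_eq_zero_of_natDegree_lt h]
    exact zero_mem _

theorem contentIdeal_mul_of_isUnit_coeff [IsLocalRing R] {f : R[X]} {i : ℕ}
    (hi : IsUnit (f.coeff i)) (g : R[X]) : (f * g).contentIdeal = g.contentIdeal := by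
  refine le_antisymm (contentIdeal_le_contentIdeal_of_dvd (dvd_mul_left g f)) ?_
  obtain ⟨d, hd, hgt⟩ := exists_greatest_isUnit_coeff hi
  have hcoeff (j : ℕ) :
      g.coeff j ∈ (f * g).contentIdeal ⊔ maximalIdeal R • g.contentIdeal :=
    coeff_mem_of_coeff_mul_mem hd (fun n => Ideal.mem_sup_left (coeff_mem_contentIdeal _ n))
      (fun a ha b => Ideal.mem_sup_right
        (Submodule.smul_mem_smul (hgt a ha) (coeff_mem_contentIdeal g b))) j
  refine Submodule.le_of_le_smul_of_le_jacobson_bot g.contentIdeal_FG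
    (jacobson_eq_maximalIdeal ⊥ bot_ne_top).ge ?_
  refine (contentIdeal_eq_span_range_coeff g).trans_le (Ideal.span_le.mpr ?_)
  rintro _ ⟨j, rfl⟩
  exact hcoeff j

theorem mul_eq_map_of_coeff_mul_coeff (φ : S →+* R) {F G : R[X]} {f g : S[X]}
    (h : ∀ i j, F.coeff i * G.coeff j = φ (f.coeff i * g.coeff j)) :
    F * G = (f * g).map φ := by
  ext n
  simp only [coeff_mul, coeff_map, map_sum, h]

theorem contentIdeal_mul_contentIdeal_eq_map_of_coeff_mul_coeff (φ : S →+* R) {F G : R[X]}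
    {f g : S[X]} (h : ∀ i j, F.coeff i * G.coeff j = φ (f.coeff i * g.coeff j)) :
    F.contentIdeal * G.contentIdeal = (f.contentIdeal * g.contentIdeal).map φ := by
  simp only [contentIdeal_eq_span_range_coeff, Ideal.span_mul_span', ← Set.image2_mul,
    Set.image2_range, Ideal.map_span, h, ← Set.range_comp]
  rfl

end Polynomial

theorem isGaussianRing_iff_contentIdeal_mul {R : Type*} [CommRing R] :
    IsGaussianRing R ↔
      ∀ f g : R[X], (f * g).contentIdeal = f.contentIdeal * g.contentIdeal := by
  simp only [IsGaussianRing, IsGaussianPoly, contentIdeal,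
    Polynomial.contentIdeal_eq_span_range_coeff]

theorem IsGaussianRing.of_surjective {R S : Type*} [CommRing R] [CommRing S] (φ : R →+* S)
    (hφ : Function.Surjective φ) (hR : IsGaussianRing R) : IsGaussianRing S := by
  rw [isGaussianRing_iff_contentIdeal_mul] at hR ⊢
  intro f g
  obtain ⟨f, rfl⟩ := Polynomial.map_surjective φ hφ f
  obtain ⟨g, rfl⟩ := Polynomial.map_surjective φ hφ g
  simp only [← Polynomial.map_mul, Polynomial.contentIdeal_map_eq_map_contentIdeal, hR,
    Ideal.map_mul]

namespace TrivSqZeroExt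

variable {A E : Type*} [CommRing A] [AddCommGroup E] [Module A E] [Module Aᵐᵒᵖ E]
  [IsCentralScalar A E]

instance [IsLocalRing A] : IsLocalRing (TrivSqZeroExt A E) :=
  .of_isUnit_or_isUnit_one_sub_self fun x => by
    simpa only [isUnit_iff_isUnit_fst, fst_sub, fst_one] using isUnit_or_isUnit_one_sub_self x.fst

theorem mul_eq_inl_fst_mul_fst {x y : TrivSqZeroExt A E} (hx : ∀ e : E, x.fst • e = 0)
    (hy : ∀ e : E, y.fst • e = 0) : x * y = inl (x.fst * y.fst) := by
  ext
  · rfl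
  · simp [hx, hy]

theorem isGaussianRing_of_isGaussianRing [IsLocalRing A]
    (hME : ∀ m ∈ maximalIdeal A, ∀ e : E, m • e = 0) (hA : IsGaussianRing A) :
    IsGaussianRing (TrivSqZeroExt A E) := by
  rw [isGaussianRing_iff_contentIdeal_mul] at hA ⊢
  intro F G
  by_cases hF : ∃ i, IsUnit (F.coeff i)
  · obtain ⟨i, hi⟩ := hF
    rw [Polynomial.contentIdeal_mul_of_isUnit_coeff hi,
      Ideal.eq_top_of_isUnit_mem _ (F.coeff_mem_contentIdeal i) hi, Ideal.top_mul]
  by_cases hG : ∃ j, IsUnit (G.coeff j)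
  · obtain ⟨j, hj⟩ := hG
    rw [mul_comm, Polynomial.contentIdeal_mul_of_isUnit_coeff hj,
      Ideal.eq_top_of_isUnit_mem _ (G.coeff_mem_contentIdeal j) hj, Ideal.mul_top]
  simp only [not_exists] at hF hG
  have hfst (P : (TrivSqZeroExt A E)[X]) (hP : ∀ i, ¬IsUnit (P.coeff i)) (i : ℕ) (e : E) :
      (P.coeff i).fst • e = 0 :=
    hME _ (by simpa [isUnit_iff_isUnit_fst] using hP i) e
  have hcoeff (i j : ℕ) : F.coeff i * G.coeff j =
      inlHom A E ((F.map (fstHom A A E).toRingHom).coeff i *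
        (G.map (fstHom A A E).toRingHom).coeff j) := by
    rw [Polynomial.coeff_map, Polynomial.coeff_map]
    exact mul_eq_inl_fst_mul_fst (hfst F hF i) (hfst G hG j)
  rw [Polynomial.mul_eq_map_of_coeff_mul_coeff _ hcoeff,
    Polynomial.contentIdeal_map_eq_map_contentIdeal, hA,
    Polynomial.contentIdeal_mul_contentIdeal_eq_map_of_coeff_mul_coeff _ hcoeff]

end TrivSqZeroExt

theorem gaussian_trivSqZeroExt_local_iff_general (A E : Type*) [CommRing A] [IsLocalRing A]
    [AddCommGroup E] [Module A E] [Module Aᵐᵒᵖ E] [IsCentralScalar A E]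
    (hME : ∀ m ∈ IsLocalRing.maximalIdeal A, ∀ e : E, m • e = 0) :
    IsGaussianRing (TrivSqZeroExt A E) ↔ IsGaussianRing A :=
  ⟨fun h => h.of_surjective (fstHom A A E).toRingHom fst_surjective,
    isGaussianRing_of_isGaussianRing hME⟩

/-- Let `(A,M)` be a local ring and `E` a nonzero `A`-module with `M • E = 0`.
Then the trivial ring extension `R := A ⋉ E` is a Gaussian ring iff `A` is Gaussian. -/
theorem gaussian_trivSqZeroExt_local_iff (A E : Type*) [CommRing A] [IsLocalRing A]
    [AddCommGroup E] [Module A E] [Module Aᵐᵒᵖ E] [IsCentralScalar A E] [Nontrivial E]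
    (hME : ∀ m ∈ IsLocalRing.maximalIdeal A, ∀ e : E, m • e = 0) :
    IsGaussianRing (TrivSqZeroExt A E) ↔ IsGaussianRing A :=
  gaussian_trivSqZeroExt_local_iff_general A E hME
end

section
/- Let (A,M) be a local ring and E a nonzero A-module with M·E = 0 (i.e., E is a vector space over A/M). Then the trivial ring extension R := A ⋉ E is an arithmetical ring if and only if A is a field and E is one-dimensional over A, i.e., there exists a nonzero e ∈ E such that every element of E is of the form a • e for some a ∈ A. -/
/-! A local ring is arithmetical exactly when its finitely generated ideals are principal, and
then divisibility is total: if `span {a, b} = span {g}` with `a = a' g`, `b = b' g` and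
`g = r a + s b`, then `g (1 - r a' - s b') = 0`, so either `g = 0` or one of `a'`, `b'` is a unit.
In `A ⋉ E` with `M E = 0` and `e ≠ 0`, neither of `inl m` (for `0 ≠ m ∈ M`) and `inr e` divides
the other, so `M = 0`; comparing `inr e` with `inr x` puts `x` in `A e`. Conversely, over a field
with `E = K e`, every ideal of `K ⋉ E` is `0`, `0 ⋉ E = span {inr e}` or the whole ring. -/

open IsLocalRing TrivSqZeroExt

section Arithmetical

variable {R : Type*} [CommRing R]

theorem IsBezout.isArithmeticalRing [IsBezout R] : IsArithmeticalRing R :=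
  fun I hI _ _ => (IsBezout.isPrincipal_of_FG I hI).map_ringHom _

theorem IsArithmeticalRing.isBezout [IsLocalRing R] (h : IsArithmeticalRing R) : IsBezout R := by
  refine ⟨fun I hI => ?_⟩
  have hunits : (maximalIdeal R).primeCompl ≤ IsUnit.submonoid R := fun x hx =>
    (IsUnit.mem_submonoid_iff x).mpr (by simpa using hx)
  have hbij : Function.Bijective (algebraMap R (Localization (maximalIdeal R).primeCompl)) :=
    (IsLocalization.atUnits R _ hunits).bijective
  have := (h I hI _ (maximalIdeal.isMaximal R)).map_ringHom (RingEquiv.ofBijective _ hbij).symm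
  rw [Ideal.map_symm] at this
  convert this
  exact (Ideal.comap_map_of_bijective _ hbij).symm

end Arithmetical

instance PreValuationRing.of_isLocalRing_of_isBezout {R : Type*} [CommRing R] [IsLocalRing R]
    [IsBezout R] : PreValuationRing R := by
  refine PreValuationRing.iff_dvd_total.mpr ⟨fun a b => ?_⟩
  obtain ⟨g, hg⟩ := (IsBezout.span_pair_isPrincipal a b).principal
  rw [Ideal.submodule_span_eq] at hg
  obtain ⟨x, rfl⟩ := Ideal.mem_span_singleton'.mp (hg ▸ Ideal.subset_span (by simp) : a ∈ _)
  obtain ⟨y, rfl⟩ := Ideal.mem_span_singleton'.mp (hg ▸ Ideal.subset_span (by simp) : b ∈ _)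
  obtain ⟨r, s, hrs⟩ := Ideal.mem_span_pair.mp (hg ▸ Ideal.mem_span_singleton_self g : g ∈ _)
  have hg_ann : g * (1 - (r * x + s * y)) = 0 := by linear_combination -hrs
  rcases isUnit_or_isUnit_one_sub_self (r * x + s * y) with hunit | hunit
  · rcases isUnit_or_isUnit_of_isUnit_add hunit with hx | hy
    · exact .inl (mul_dvd_mul_right (isUnit_of_mul_isUnit_right hx).dvd _)
    · exact .inr (mul_dvd_mul_right (isUnit_of_mul_isUnit_right hy).dvd _)
  · simp [hunit.mul_left_eq_zero.mp hg_ann]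

namespace TrivSqZeroExt

section

variable {A E : Type*} [CommRing A] [AddCommGroup E] [Module A E] [Module Aᵐᵒᵖ E]
  [IsCentralScalar A E]

instance isLocalRing [IsLocalRing A] : IsLocalRing (TrivSqZeroExt A E) :=
  .of_isUnit_or_isUnit_one_sub_self fun x => by
    simpa only [isUnit_iff_isUnit_fst, fst_sub, fst_one] using
      isUnit_or_isUnit_one_sub_self x.fst

theorem inr_dvd_inr_iff {x y : E} : (inr y : TrivSqZeroExt A E) ∣ inr x ↔ ∃ a : A, x = a • y := by
  constructor
  · rintro ⟨c, hc⟩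
    exact ⟨c.fst, by simpa [op_smul_eq_smul] using congrArg snd hc⟩
  · rintro ⟨a, rfl⟩
    exact ⟨inl a, by rw [mul_comm, inl_mul_inr]⟩

theorem fst_eq_zero_of_inr_dvd {e : E} {x : TrivSqZeroExt A E} (h : inr e ∣ x) : x.fst = 0 := by
  obtain ⟨c, rfl⟩ := h
  simp

theorem isField_of_preValuationRing [IsLocalRing A] [Nontrivial E]
    [PreValuationRing (TrivSqZeroExt A E)] (hME : ∀ m ∈ maximalIdeal A, ∀ e : E, m • e = 0) :
    IsField A := by
  obtain ⟨e, he⟩ := exists_ne (0 : E)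
  rw [isField_iff_maximalIdeal_eq, eq_bot_iff]
  intro m hm
  rcases ValuationRing.dvd_total (inl m : TrivSqZeroExt A E) (inr e) with ⟨c, hc⟩ | h
  · exact absurd (by simpa [hME m hm] using congrArg snd hc) he
  · simpa using fst_eq_zero_of_inr_dvd h

theorem exists_eq_smul_of_preValuationRing [IsLocalRing A] [PreValuationRing (TrivSqZeroExt A E)]
    (hME : ∀ m ∈ maximalIdeal A, ∀ e : E, m • e = 0) {e : E} (he : e ≠ 0) (x : E) :
    ∃ a : A, x = a • e := by
  rcases ValuationRing.dvd_total (inr e : TrivSqZeroExt A E) (inr x) with h | h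
  · exact inr_dvd_inr_iff.mp h
  · obtain ⟨a, rfl⟩ := inr_dvd_inr_iff.mp h
    have ha : IsUnit a := by
      by_contra ha
      exact he (hME a ((mem_maximalIdeal a).mpr ha) x)
    exact ⟨↑ha.unit⁻¹, by rw [smul_smul, IsUnit.val_inv_mul, one_smul]⟩

end

theorem isPrincipalIdealRing_of_forall_eq_smul {K E : Type*} [Field K] [AddCommGroup E]
    [Module K E] [Module Kᵐᵒᵖ E] [IsCentralScalar K E] {e : E} (he : ∀ x : E, ∃ a : K, x = a • e) :
    IsPrincipalIdealRing (TrivSqZeroExt K E) := by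
  refine ⟨fun I => ?_⟩
  by_cases! hfst : ∃ z ∈ I, z.fst ≠ 0
  · obtain ⟨z, hz, hz0⟩ := hfst
    rw [Ideal.eq_top_of_isUnit_mem I hz (isUnit_iff_isUnit_fst.mpr hz0.isUnit)]
    exact ⟨⟨1, Ideal.span_singleton_one.symm⟩⟩
  have hI : ∀ z ∈ I, ∃ a : K, z = inl a * inr e := fun z hz => by
    obtain ⟨a, ha⟩ := he z.snd
    exact ⟨a, by ext <;> simp [hfst z hz, ← ha]⟩
  by_cases heI : inr e ∈ I
  · refine ⟨⟨inr e, le_antisymm (fun z hz => ?_) ((Ideal.span_singleton_le_iff_mem I).mpr heI)⟩⟩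
    obtain ⟨a, rfl⟩ := hI z hz
    exact Ideal.mul_mem_left _ _ (Ideal.mem_span_singleton_self _)
  · refine ⟨⟨0, ?_⟩⟩
    rw [Submodule.span_zero_singleton, eq_bot_iff]
    intro z hz
    obtain ⟨a, rfl⟩ := hI z hz
    obtain rfl : a = 0 := by
      by_contra ha
      apply heI
      simpa [← mul_assoc, ← inl_mul, ha] using I.mul_mem_left (inl a⁻¹) hz
    simp

end TrivSqZeroExt

/-- Let `(A,M)` be a local ring and `E` a nonzero `A`-module with `M • E = 0`.
Then `R := A ⋉ E` is arithmetical iff `A` is a field and `E` is one-dimensional over `A`. -/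
theorem arithmetical_trivSqZeroExt_local_iff (A E : Type*) [CommRing A] [IsLocalRing A]
    [AddCommGroup E] [Module A E] [Module Aᵐᵒᵖ E] [IsCentralScalar A E] [Nontrivial E]
    (hME : ∀ m ∈ IsLocalRing.maximalIdeal A, ∀ e : E, m • e = 0) :
    IsArithmeticalRing (TrivSqZeroExt A E) ↔
      IsField A ∧ ∃ e : E, e ≠ 0 ∧ ∀ x : E, ∃ a : A, x = a • e := by
  constructor
  · intro h
    have := h.isBezout
    obtain ⟨e, he⟩ := exists_ne (0 : E)
    exact ⟨isField_of_preValuationRing hME, e, he, exists_eq_smul_of_preValuationRing hME he⟩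
  · rintro ⟨hA, e, -, he⟩
    let := hA.toField
    have := isPrincipalIdealRing_of_forall_eq_smul he
    exact IsBezout.isArithmeticalRing
end

section
/- Let K be a field and E a K-vector space with dim_K E ≥ 2. Then the trivial ring extension R := K ⋉ E is a Gaussian ring, is not arithmetical, and is a total ring of quotients (every element of R is either a unit or a zero-divisor). -/
open scoped Polynomial

theorem contentIdeal_eq_polynomial_contentIdeal {R : Type*} [CommRing R] (f : R[X]) :
    contentIdeal f = f.contentIdeal := by
  refine le_antisymm (Ideal.span_le.2 ?_) (Ideal.span_le.2 ?_)
  · rintro _ ⟨n, rfl⟩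
    exact f.coeff_mem_contentIdeal n
  · intro c hc
    obtain ⟨n, -, rfl⟩ := Polynomial.mem_coeffs_iff.1 hc
    exact Ideal.subset_span ⟨n, rfl⟩

open IsLocalRing in
theorem IsArithmeticalRing.isPrincipal_of_fg {R : Type*} [CommRing R] [IsLocalRing R]
    (hR : IsArithmeticalRing R) {I : Ideal R} (hI : I.FG) : I.IsPrincipal := by
  let e := IsLocalization.atUnits R (maximalIdeal R).primeCompl
    (S := Localization (maximalIdeal R).primeCompl) fun _ hx => notMem_maximalIdeal.1 hx
  have := (hR I hI _ (maximalIdeal.isMaximal R)).map_ringHom e.symm.toRingHom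
  rwa [Ideal.map_map, show e.symm.toRingHom.comp (algebraMap _ _) = RingHom.id R from
    e.symm.toAlgHom.comp_algebraMap, Ideal.map_id] at this

namespace TrivSqZeroExt

section CommRing

variable {R M : Type*} [CommRing R] [AddCommGroup M] [Module R M] [Module Rᵐᵒᵖ M]
  [IsCentralScalar R M]

@[simp]
theorem mem_kerIdeal {x : TrivSqZeroExt R M} : x ∈ kerIdeal R M ↔ x.fst = 0 := Iff.rfl

instance [IsLocalRing R] : IsLocalRing (TrivSqZeroExt R M) :=
  .of_nonunits_add fun a b ha hb => by
    simp only [mem_nonunits_iff, isUnit_iff_isUnit_fst, fst_add] at *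
    exact IsLocalRing.nonunits_add ha hb

theorem inr_mem_of_mem_span {I : Ideal (TrivSqZeroExt R M)} {S : Set M}
    (hS : ∀ m ∈ S, inr m ∈ I) {m : M} (hm : m ∈ Submodule.span R S) : inr m ∈ I := by
  induction hm using Submodule.span_induction with
  | mem m hm => exact hS m hm
  | zero => simp
  | add m n _ _ hm hn => simpa using I.add_mem hm hn
  | smul r m _ hm =>
    rw [← inl_mul_inr]
    exact I.mul_mem_left _ hm

theorem mem_span_snd_of_inr_mem_span_singleton {x : TrivSqZeroExt R M} (hx : x.fst = 0) {m : M}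
    (hm : inr m ∈ Ideal.span {x}) : m ∈ R ∙ x.snd := by
  obtain ⟨r, hr⟩ := Ideal.mem_span_singleton'.1 hm
  exact Submodule.mem_span_singleton.2 ⟨r.fst, by simpa [hx] using congrArg snd hr⟩

theorem snd_coeff_mul_of_fst_coeff_eq_zero {f : (TrivSqZeroExt R M)[X]}
    (hf : ∀ i, (f.coeff i).fst = 0) (g : (TrivSqZeroExt R M)[X]) (k : ℕ) :
    ((f * g).coeff k).snd =
      ∑ x ∈ Finset.HasAntidiagonal.antidiagonal k, (g.coeff x.2).fst • (f.coeff x.1).snd := by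
  simp [Polynomial.coeff_mul, snd_sum, hf, op_smul_eq_smul]

end CommRing

section Field

variable {K E : Type*} [Field K] [AddCommGroup E] [Module K E] [Module Kᵐᵒᵖ E]
  [IsCentralScalar K E]

theorem maximalIdeal_eq_kerIdeal : IsLocalRing.maximalIdeal (TrivSqZeroExt K E) = kerIdeal K E :=
  (IsLocalRing.eq_maximalIdeal <|
    RingHom.ker_isMaximal_of_surjective (fstHom K K E) fun a => ⟨inl a, rfl⟩).symm

theorem le_kerIdeal_of_ne_top {I : Ideal (TrivSqZeroExt K E)} (hI : I ≠ ⊤) :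
    I ≤ kerIdeal K E := by
  rw [← maximalIdeal_eq_kerIdeal]
  exact IsLocalRing.le_maximalIdeal hI

theorem snd_coeff_mem_span_snd_coeff_mul {f g : (TrivSqZeroExt K E)[X]}
    (hf : ∀ i, (f.coeff i).fst = 0) (hg : g.map (fstHom K K E).toRingHom ≠ 0) (i : ℕ) :
    (f.coeff i).snd ∈ Submodule.span K (Set.range fun k => ((f * g).coeff k).snd) := by
  by_contra hi
  obtain ⟨φ, hφi, hφ⟩ := Submodule.exists_dual_map_eq_bot_of_notMem hi inferInstance
  let q : K[X] := ∑ j ∈ f.support, Polynomial.monomial j (φ (f.coeff j).snd)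
  have hq (j : ℕ) : q.coeff j = φ (f.coeff j).snd := by
    by_cases hj : j ∈ f.support <;> simp_all [q, Polynomial.coeff_monomial]
  have hqg : q * g.map (fstHom K K E).toRingHom = 0 := by
    ext k
    have : φ ((f * g).coeff k).snd = 0 :=
      (Submodule.mem_bot K).1 (hφ ▸ Submodule.mem_map_of_mem (Submodule.subset_span ⟨k, rfl⟩))
    rw [snd_coeff_mul_of_fst_coeff_eq_zero hf, map_sum] at this
    rw [Polynomial.coeff_mul, Polynomial.coeff_zero, ← this]
    exact Finset.sum_congr rfl fun x _ => by simp [hq, mul_comm]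
  exact hφi (by rw [← hq, (mul_eq_zero.1 hqg).resolve_right hg, Polynomial.coeff_zero])

theorem contentIdeal_le_contentIdeal_mul {f g : (TrivSqZeroExt K E)[X]}
    (hf : f.contentIdeal ≤ kerIdeal K E) (hg : g.contentIdeal = ⊤) :
    f.contentIdeal ≤ (f * g).contentIdeal := by
  have hf_fst (i : ℕ) : (f.coeff i).fst = 0 := hf (f.coeff_mem_contentIdeal i)
  have hg_map : g.map (fstHom K K E).toRingHom ≠ 0 := by
    rw [Ne, ← Polynomial.contentIdeal_eq_bot_iff,
      Polynomial.contentIdeal_map_eq_map_contentIdeal, hg, Ideal.map_top]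
    exact top_ne_bot
  have hfg_fst (k : ℕ) : ((f * g).coeff k).fst = 0 :=
    hf <| Polynomial.contentIdeal_le_contentIdeal_of_dvd (dvd_mul_right f g)
      ((f * g).coeff_mem_contentIdeal k)
  rw [Polynomial.contentIdeal_def, Ideal.span_le]
  intro c hc
  obtain ⟨i, -, rfl⟩ := Polynomial.mem_coeffs_iff.1 hc
  rw [SetLike.mem_coe, (mem_kerIdeal_iff_inr _ _ _).1 (hf_fst i)]
  refine inr_mem_of_mem_span ?_ (snd_coeff_mem_span_snd_coeff_mul hf_fst hg_map i)
  rintro _ ⟨k, rfl⟩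
  rw [← (mem_kerIdeal_iff_inr _ _ _).1 (hfg_fst k)]
  exact (f * g).coeff_mem_contentIdeal k

theorem isGaussianRing : IsGaussianRing (TrivSqZeroExt K E) := by
  intro f g
  simp only [contentIdeal_eq_polynomial_contentIdeal]
  refine (f.contentIdeal_mul_le_mul_contentIdeal g).antisymm ?_
  by_cases hf : f.contentIdeal = ⊤ <;> by_cases hg : g.contentIdeal = ⊤
  · simp [hf, hg, Polynomial.contentIdeal_mul_eq_top_of_contentIdeal_eq_top hf hg]
  · rw [hf, Ideal.top_mul, mul_comm f]
    exact contentIdeal_le_contentIdeal_mul (le_kerIdeal_of_ne_top hg) hf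
  · rw [hg, Ideal.mul_top]
    exact contentIdeal_le_contentIdeal_mul (le_kerIdeal_of_ne_top hf) hg
  · calc f.contentIdeal * g.contentIdeal ≤ kerIdeal K E * kerIdeal K E :=
          Ideal.mul_mono (le_kerIdeal_of_ne_top hf) (le_kerIdeal_of_ne_top hg)
      _ = ⊥ := by rw [← pow_two, kerIdeal_sq]
      _ ≤ _ := bot_le

theorem isTotalRingOfQuotients [Nontrivial E] : IsTotalRingOfQuotients (TrivSqZeroExt K E) := by
  intro r
  by_cases hr : r.fst = 0
  · obtain ⟨m, hm⟩ := exists_ne (0 : E)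
    refine Or.inr fun hreg => hm ?_
    have : inr m * r = 0 := ext (by simp) (by simp [hr])
    simpa using congrArg snd ((mem_nonZeroDivisors_iff.1 hreg).2 _ this)
  · exact Or.inl (isUnit_iff_isUnit_fst.2 (isUnit_iff_ne_zero.2 hr))

theorem not_isPrincipal_span_inr_pair {v w : E} (h : LinearIndependent K ![v, w]) :
    ¬ (Ideal.span {inr v, inr w} : Ideal (TrivSqZeroExt K E)).IsPrincipal := by
  rintro ⟨x, hx⟩
  rw [Ideal.submodule_span_eq] at hx
  have hx_fst : x.fst = 0 := by
    have hle : Ideal.span {inr v, inr w} ≤ kerIdeal K E := by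
      simp [Ideal.span_le, Set.insert_subset_iff]
    exact hle (hx ▸ Ideal.mem_span_singleton_self x)
  obtain ⟨a, rfl⟩ := Submodule.mem_span_singleton.1 <|
    mem_span_snd_of_inr_mem_span_singleton (m := v) hx_fst (hx ▸ Ideal.subset_span (by simp))
  obtain ⟨b, rfl⟩ := Submodule.mem_span_singleton.1 <|
    mem_span_snd_of_inr_mem_span_singleton (m := w) hx_fst (hx ▸ Ideal.subset_span (by simp))
  have hb : b = 0 := (LinearIndependent.pair_iff.1 h b (-a) (by
    rw [smul_smul, smul_smul, mul_comm, neg_mul, neg_smul, add_neg_cancel])).1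
  exact h.ne_zero 1 (by simp [hb])

theorem not_isArithmeticalRing {v w : E} (h : LinearIndependent K ![v, w]) :
    ¬ IsArithmeticalRing (TrivSqZeroExt K E) := fun hR =>
  not_isPrincipal_span_inr_pair h (hR.isPrincipal_of_fg (Submodule.fg_span (Set.toFinite _)))

end Field

end TrivSqZeroExt

/-- Let `K` be a field and `E` a `K`-vector space with `dim_K E ≥ 2`. Then
`R := K ⋉ E` is a Gaussian ring, is not arithmetical, and is a total ring of quotients. -/
theorem trivSqZeroExt_field_rank_ge_two (K E : Type*) [Field K]
    [AddCommGroup E] [Module K E] [Module Kᵐᵒᵖ E] [IsCentralScalar K E]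
    (hrank : 2 ≤ Module.rank K E) :
    IsGaussianRing (TrivSqZeroExt K E) ∧ ¬ IsArithmeticalRing (TrivSqZeroExt K E) ∧
      IsTotalRingOfQuotients (TrivSqZeroExt K E) := by
  have hrank_one : 1 < Module.rank K E := lt_of_lt_of_le (by norm_num) hrank
  have : Nontrivial E := rank_pos_iff_nontrivial.1 (zero_lt_one.trans hrank_one)
  obtain ⟨v, hv⟩ := exists_ne (0 : E)
  obtain ⟨w, hvw⟩ := exists_linearIndependent_pair_of_one_lt_rank hrank_one hv
  exact ⟨TrivSqZeroExt.isGaussianRing, TrivSqZeroExt.not_isArithmeticalRing hvw,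
    TrivSqZeroExt.isTotalRingOfQuotients⟩
end

section
/- Let A ⊆ B be an extension of commutative rings (B is a commutative ring equipped with an injective A-algebra structure, viewed as an A-module) and let R := A ⋉ B be the trivial ring extension of A by B. If R is pseudo-arithmetical, then A is pseudo-arithmetical. -/
/-!
A Gaussian polynomial `f` over `A` lifts to `inr 1 · f` over `A ⋉ B`. Since `inr 1 · x` only
depends on the first component of `x`, the content of a product with `inr 1 · f` is computed
over `A`, so the lift is again Gaussian, with content ideal `(inr 1) · c(f)`.

Let `Q = P ⋉ B` be the maximal ideal over `P`. As `A ⊆ B`, multiplication by `inr 1` embeds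
`A_P` into `(A ⋉ B)_Q`, and the embedding is linear for `(A ⋉ B)_Q` acting on `A_P` through the
projection `(A ⋉ B)_Q → A_P`. A generator of `c(inr 1 · f)_Q` is thus the image of an element
of `c(f)_P`, which then generates `c(f)_P`.
-/

open scoped Polynomial

open TrivSqZeroExt

section Content

variable {R S : Type*} [CommRing R] [CommRing S]

theorem contentIdeal_map (φ : R →+* S) (p : R[X]) :
    contentIdeal (p.map φ) = (contentIdeal p).map φ := by
  rw [contentIdeal, contentIdeal, Ideal.map_span, ← Set.range_comp]
  congr 2
  ext n
  exact Polynomial.coeff_map φ n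

theorem contentIdeal_C_mul (r : R) (p : R[X]) :
    contentIdeal (Polynomial.C r * p) = Ideal.span {r} * contentIdeal p := by
  rw [contentIdeal, contentIdeal, Ideal.span_mul_span', Set.singleton_mul, ← Set.range_comp]
  congr 2
  ext n
  exact Polynomial.coeff_C_mul p

open Pointwise in
theorem Ideal.span_singleton_mul_map_eq (σ : R →+* R) {e : R} (he : ∀ x, e * σ x = e * x)
    (K : Ideal R) : Ideal.span {e} * K.map σ = Ideal.span {e} * K := by
  have hset : ({e} : Set R) * (σ '' K) = {e} * K := by
    simp only [Set.singleton_mul, Set.image_image, he]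
  rw [Ideal.map, Ideal.span_mul_span', hset, ← Ideal.span_mul_span', Ideal.span_eq]

end Content

section GaussianLift

variable {A R : Type*} [CommRing A] [CommRing R] (ι : A →+* R) (π : R →+* A) {e : R}

theorem Polynomial.C_mul_map_map_eq (he : ∀ x, e * ι (π x) = e * x) (g : R[X]) :
    C e * (g.map π).map ι = C e * g := by
  ext n
  simp only [coeff_C_mul, coeff_map, he]

theorem IsGaussianPoly.C_mul_map (he : ∀ x, e * ι (π x) = e * x) {f : A[X]}
    (hf : IsGaussianPoly f) : IsGaussianPoly (Polynomial.C e * f.map ι) := by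
  intro g
  have hprod : Polynomial.C e * f.map ι * g = Polynomial.C e * (f * g.map π).map ι := by
    rw [Polynomial.map_mul, mul_left_comm, Polynomial.C_mul_map_map_eq ι π he, mul_left_comm,
      mul_assoc]
  rw [hprod, contentIdeal_C_mul, contentIdeal_map, hf, Ideal.map_mul, contentIdeal_map,
    Ideal.map_map, contentIdeal_C_mul, contentIdeal_map, mul_left_comm,
    Ideal.span_singleton_mul_map_eq (ι.comp π) he, mul_left_comm, mul_assoc]

end GaussianLift

theorem IsLocalization.mul_eq_mul_of_comp_algebraMap {R S T : Type*} [CommRing R] [CommRing S]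
    [CommRing T] [Algebra R S] (M : Submonoid R) [IsLocalization M S] (j k : S →+* T) {e : T}
    (h : ∀ r, j (algebraMap R S r) * e = k (algebraMap R S r) * e) (l : S) :
    j l * e = k l * e := by
  let q := Ideal.Quotient.mk (Ideal.span {e}).annihilator
  have hq (x y : T) : q x = q y ↔ x * e = y * e := by
    rw [Ideal.Quotient.eq, Submodule.mem_annihilator_span_singleton, smul_eq_mul, sub_mul,
      sub_eq_zero]
  have hjk : q.comp j = q.comp k :=
    IsLocalization.ringHom_ext M <| RingHom.ext fun r => (hq _ _).2 (h r)
  exact (hq _ _).1 (RingHom.congr_fun hjk l)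

theorem Ideal.IsPrincipal.of_map_mul_span_singleton {T S : Type*} [CommRing T] [CommRing S]
    (ρ : T →+* S) (ψ : S →+* T) (hψρ : ψ.comp ρ = RingHom.id T) {e : S}
    (hρψ : ∀ l, l * e = ρ (ψ l) * e) (hinj : ∀ y, ρ y * e = 0 → y = 0) {K : Ideal T}
    (h : (K.map ρ * Ideal.span {e}).IsPrincipal) : K.IsPrincipal := by
  have hcancel (a b : T) (hab : ρ a * e = ρ b * e) : a = b :=
    sub_eq_zero.1 <| hinj _ <| by rw [map_sub, sub_mul, hab, sub_self]
  obtain ⟨w, hw⟩ := h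
  have hwmem : w ∈ K.map ρ * Ideal.span {e} := hw ▸ Submodule.mem_span_singleton_self w
  obtain ⟨z, hz, rfl⟩ := Ideal.mem_mul_span_singleton.1 hwmem
  have hψz : ψ z ∈ K := by
    simpa [Ideal.map_map, hψρ] using Ideal.mem_map_of_mem ψ hz
  refine ⟨ψ z, le_antisymm (fun a ha => ?_) (Ideal.span_singleton_le_iff_mem _ |>.2 hψz)⟩
  have hmem : ρ a * e ∈ Submodule.span S {z * e} :=
    hw ▸ Ideal.mul_mem_mul (Ideal.mem_map_of_mem ρ ha) (Ideal.mem_span_singleton_self e)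
  obtain ⟨l, hl⟩ := Ideal.mem_span_singleton'.1 hmem
  refine Ideal.mem_span_singleton'.2 ⟨ψ l, hcancel _ _ ?_⟩
  calc ρ (ψ l * ψ z) * e = ρ (ψ z) * (ρ (ψ l) * e) := by rw [map_mul]; ring
    _ = l * (ρ (ψ z) * e) := by rw [← hρψ]; ring
    _ = ρ a * e := by rw [← hρψ, hl]

namespace TrivSqZeroExt

variable {A B : Type*} [CommRing A] [CommRing B] [Algebra A B] [Module Aᵐᵒᵖ B]
  [IsCentralScalar A B]

theorem inr_one_mul (x : TrivSqZeroExt A B) : inr (1 : B) * x = inr (algebraMap A B x.fst) := by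
  rw [mul_comm, ← inl_fst_add_inr_snd_eq x, add_mul, inr_mul_inr, add_zero, inl_mul_inr,
    Algebra.algebraMap_eq_smul_one, fst_add, fst_inl, fst_inr, add_zero]

theorem inr_one_mul_inl_fst (x : TrivSqZeroExt A B) :
    inr (1 : B) * inl x.fst = inr 1 * x := by
  rw [inr_one_mul, inr_one_mul, fst_inl]

theorem algebraMap_atPrime_eq_zero_of_inl_mul_inr_one (hinj : Function.Injective (algebraMap A B))
    (P : Ideal A) [P.IsPrime] {a : A}
    (ha : algebraMap _ (Localization.AtPrime (P.comap (fstHom A A B).toRingHom))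
      (inl a * inr (1 : B)) = 0) :
    algebraMap A (Localization.AtPrime P) a = 0 := by
  obtain ⟨m, hm⟩ :=
    (IsLocalization.map_eq_zero_iff (P.comap (fstHom A A B).toRingHom).primeCompl _ _).1 ha
  have hma : (inr (algebraMap A B (m.1.fst * a)) : TrivSqZeroExt A B) = 0 := by
    rw [← fst_inl B a, ← fst_mul, ← inr_one_mul, ← hm]
    ring
  refine (IsLocalization.map_eq_zero_iff P.primeCompl _ _).2 ⟨⟨m.1.fst, m.2⟩, hinj ?_⟩
  rw [map_zero]
  exact inr_injective (hma.trans (inr_zero A).symm)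

theorem isPrincipal_map_atPrime_of_span_inr_one_mul (hinj : Function.Injective (algebraMap A B))
    (P : Ideal A) [P.IsPrime] {I : Ideal A}
    (h : ((Ideal.span {inr (1 : B)} * I.map (inlHom A B)).map
      (algebraMap _ (Localization.AtPrime (P.comap (fstHom A A B).toRingHom)))).IsPrincipal) :
    (I.map (algebraMap A (Localization.AtPrime P))).IsPrincipal := by
  set π := (fstHom A A B).toRingHom
  set Q := P.comap π
  set θ := algebraMap (TrivSqZeroExt A B) (Localization.AtPrime Q)
  set ρ := Localization.localRingHom P Q (inlHom A B) rfl
  set ψ := Localization.localRingHom Q P π rfl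
  have hρ (a : A) : ρ (algebraMap A _ a) = θ (inl a) :=
    Localization.localRingHom_to_map P Q _ rfl a
  have hψ (r : TrivSqZeroExt A B) : ψ (θ r) = algebraMap A _ r.fst :=
    Localization.localRingHom_to_map Q P π rfl r
  have hψρ : ψ.comp ρ = RingHom.id _ := IsLocalization.ringHom_ext P.primeCompl <|
    RingHom.ext fun a => by simp only [RingHom.comp_apply, hρ, hψ, fst_inl, RingHom.id_apply]
  have hρψ : ∀ l, l * θ (inr 1) = ρ (ψ l) * θ (inr 1) :=
    IsLocalization.mul_eq_mul_of_comp_algebraMap Q.primeCompl (RingHom.id _) (ρ.comp ψ)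
      fun r => by
        rw [RingHom.id_apply, RingHom.comp_apply, hψ, hρ, ← map_mul, ← map_mul, mul_comm,
          mul_comm (inl _), inr_one_mul_inl_fst]
  have hρinj (y : Localization.AtPrime P) (hy : ρ y * θ (inr 1) = 0) : y = 0 := by
    obtain ⟨a, s, rfl⟩ := IsLocalization.exists_mk'_eq P.primeCompl y
    have ha : algebraMap A (Localization.AtPrime P) a = 0 := by
      refine algebraMap_atPrime_eq_zero_of_inl_mul_inr_one hinj P ?_
      rw [map_mul, ← hρ, ← IsLocalization.mk'_spec (Localization.AtPrime P) a s, map_mul,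
        mul_right_comm, hy, zero_mul]
    rw [IsLocalization.mk'_eq_mul_mk'_one, ha, zero_mul]
  have hθι : ρ.comp (algebraMap A _) = θ.comp (inlHom A B) := RingHom.ext hρ
  refine Ideal.IsPrincipal.of_map_mul_span_singleton ρ ψ hψρ hρψ hρinj ?_
  rwa [Ideal.map_map, hθι, ← Ideal.map_map, mul_comm, ← Set.image_singleton,
    ← Ideal.map_span, ← Ideal.map_mul]

end TrivSqZeroExt

/-- For an extension of commutative rings `A ⊆ B`, if the trivial ring
extension `R := A ⋉ B` is pseudo-arithmetical, then so is `A`. -/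
theorem pseudoArithmetical_of_trivSqZeroExt (A B : Type*) [CommRing A] [CommRing B]
    [Algebra A B] [Module Aᵐᵒᵖ B] [IsCentralScalar A B]
    (hinj : Function.Injective (algebraMap A B))
    (h : IsPseudoArithmetical (TrivSqZeroExt A B)) : IsPseudoArithmetical A := by
  intro f hf P hP
  have hQ : (P.comap (fstHom A A B).toRingHom).IsMaximal :=
    Ideal.comap_isMaximal_of_surjective _ fun a => ⟨inl a, rfl⟩
  have hF : IsGaussianPoly (Polynomial.C (inr 1) * f.map (inlHom A B)) :=
    hf.C_mul_map _ (fstHom A A B).toRingHom inr_one_mul_inl_fst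
  have hprin := h _ hF _ hQ
  rw [contentIdeal_C_mul, contentIdeal_map] at hprin
  exact isPrincipal_map_atPrime_of_span_inr_one_mul hinj P hprin
end
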